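/- arXiv:2203.05258 — 4 statements merged into one kernel-verified Lean document; each statement's English description precedes it below -/
import Mathlib

section
/- If an affine map s_j : Ω → cone(Ω) on a convex set Ω satisfies that s_j(ρ) is proportional to a pure (extreme) state of Ω for every ρ ∈ Ω, then the normalized output state is constant: there exists a pure state σ_j such that s_j(ρ) = e_j(ρ)·σ_j where e_j(ρ) is the normalization weight, for all ρ with e_j(ρ) > 0 on the relevant set (assuming the weight map e_j is affine and the output is nonzero on a convex set of inputs). -/
theorem eq_of_smul_add_smul_eq_smul_of_mem_extremePoints {𝕜 E : Type*} [Field 𝕜] [LinearOrder 𝕜]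
    [IsStrictOrderedRing 𝕜] [AddCommGroup E] [Module 𝕜 E] {A : Set E} {x y z : E} {a b : 𝕜}
    (hx : x ∈ A) (hy : y ∈ A) (hz : z ∈ A.extremePoints 𝕜) (ha : 0 < a) (hb : 0 < b)
    (h : a • x + b • y = (a + b) • z) : x = z ∧ y = z := by
  refine (mem_extremePoints.1 hz).2 x hx y hy (mem_openSegment_iff_div.2 ⟨a, b, ha, hb, ?_⟩)
  rw [div_eq_inv_mul, div_eq_inv_mul, mul_smul, mul_smul, ← smul_add, h, smul_smul,
    inv_mul_cancel₀ (add_pos ha hb).ne', one_smul]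

/-- The normalized outputs at `ρ₁` and `ρ₂` agree because the normalized output at their
midpoint is an extreme point lying in the open segment between them. -/
theorem eq_of_affine_apply_eq_smul_of_mem_extremePoints {V : Type*} [AddCommGroup V]
    [Module ℝ V] {Ω : Set V} (hconv : Convex ℝ Ω) {s : V →ᵃ[ℝ] V} {e : V →ᵃ[ℝ] ℝ}
    (hpure : ∀ ρ ∈ Ω, ∃ σ ∈ Set.extremePoints ℝ Ω, s ρ = e ρ • σ)
    {ρ₁ ρ₂ σ₁ σ₂ : V} (hρ₁ : ρ₁ ∈ Ω) (hρ₂ : ρ₂ ∈ Ω) (he₁ : 0 < e ρ₁) (he₂ : 0 < e ρ₂)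
    (hσ₁ : σ₁ ∈ Ω) (hσ₂ : σ₂ ∈ Ω) (hs₁ : s ρ₁ = e ρ₁ • σ₁) (hs₂ : s ρ₂ = e ρ₂ • σ₂) :
    σ₁ = σ₂ := by
  have hab : (1 / 2 : ℝ) + 1 / 2 = 1 := by norm_num
  set m := (1 / 2 : ℝ) • ρ₁ + (1 / 2 : ℝ) • ρ₂
  obtain ⟨σ, hσ, hsm⟩ := hpure m (hconv hρ₁ hρ₂ (by norm_num) (by norm_num) hab)
  have hcombo : (1 / 2 * e ρ₁) • σ₁ + (1 / 2 * e ρ₂) • σ₂ = (1 / 2 * e ρ₁ + 1 / 2 * e ρ₂) • σ :=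
    calc (1 / 2 * e ρ₁) • σ₁ + (1 / 2 * e ρ₂) • σ₂ = s m := by
          rw [Convex.combo_affine_apply hab, hs₁, hs₂, smul_smul, smul_smul]
      _ = e m • σ := hsm
      _ = (1 / 2 * e ρ₁ + 1 / 2 * e ρ₂) • σ := by
          rw [Convex.combo_affine_apply hab, smul_eq_mul, smul_eq_mul]
  obtain ⟨h₁, h₂⟩ := eq_of_smul_add_smul_eq_smul_of_mem_extremePoints hσ₁ hσ₂ hσ
    (by positivity) (by positivity) hcombo
  exact h₁.trans h₂.symm

/-- if an affine map sends every state to a multiple (with affine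
weight `e`) of some extreme point of the convex set `Ω`, and the weight is
strictly positive on `Ω`, then the normalized output state is constant: a single
extreme point `σ` works for all inputs. -/
theorem pure_output_direction_constant
    {V : Type} [AddCommGroup V] [Module ℝ V]
    (Ω : Set V) (hconv : Convex ℝ Ω) (hne : Ω.Nonempty)
    (s : V →ᵃ[ℝ] V) (e : V →ᵃ[ℝ] ℝ)
    (hpos : ∀ ρ ∈ Ω, 0 < e ρ)
    (hpure : ∀ ρ ∈ Ω, ∃ σ ∈ Set.extremePoints ℝ Ω, s ρ = e ρ • σ) :
    ∃ σ ∈ Set.extremePoints ℝ Ω, ∀ ρ ∈ Ω, s ρ = e ρ • σ := by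
  obtain ⟨ρ₀, hρ₀⟩ := hne
  obtain ⟨σ₀, hσ₀, hs₀⟩ := hpure ρ₀ hρ₀
  refine ⟨σ₀, hσ₀, fun ρ hρ => ?_⟩
  obtain ⟨σ, hσ, hs⟩ := hpure ρ hρ
  rwa [eq_of_affine_apply_eq_smul_of_mem_extremePoints hconv hpure hρ hρ₀ (hpos ρ hρ)
    (hpos ρ₀ hρ₀) hσ.1 hσ₀.1 hs hs₀] at hs
end

section
/- The affine functionals e₁(ρ) = Tr(E₁ρ) and e₂(ρ) = Tr(E₂ρ), with E₁ = (1/2)[[2,0,0,−1],[0,0,−1,0],[0,−1,0,0],[−1,0,0,2]] and E₂ = (1/2)[[0,0,0,1],[0,2,1,0],[0,1,2,0],[1,0,0,0]], satisfy E₁ + E₂ = I, are nonnegative on every separable state (i.e., Tr(E_i (p⊗q)) ≥ 0 for all 2×2 pure states p, q), and perfectly discriminate ρ₁ = |0⟩⟨0|⊗|0⟩⟨0| and ρ₂ = |+⟩⟨+|⊗|+⟩⟨+|: e₁(ρ₁) = 1, e₁(ρ₂) = 0, e₂(ρ₁) = 0, e₂(ρ₂) = 1. -/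
/-!
Write a pure qubit state as `p = [[a, z], [z̄, 1 - a]]`; idempotence forces `|z|² = a (1 - a)`.
For a second pure state `q = [[c, w], [w̄, 1 - c]]`, with `x = Re z` and `y = Re w`,
`Tr(E₁ (p ⊗ q)) = a c + (1 - a)(1 - c) - 2 x y` and `Tr(E₂ (p ⊗ q)) = a (1 - c) + (1 - a) c + 2 x y`.
Both are nonnegative because, by AM-GM,
`(2 x y)² ≤ 4 a (1 - a) c (1 - c) ≤ (a c + (1 - a)(1 - c))²`, and likewise with `c` replaced by `1 - c`.
-/

open scoped BigOperators
open Kronecker Matrix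

/-- Encoding of the two-qubit pair index into `Fin 4`, following the ordering
`|00⟩, |01⟩, |10⟩, |11⟩`. -/
def idx : Fin 2 × Fin 2 → Fin 4 := fun p => ⟨2 * p.1.val + p.2.val, by omega⟩

/-- View a `4 × 4` matrix as a matrix on `C² ⊗ C²` in the basis `|00⟩,|01⟩,|10⟩,|11⟩`. -/
def toPair (M : Matrix (Fin 4) (Fin 4) ℂ) :
    Matrix (Fin 2 × Fin 2) (Fin 2 × Fin 2) ℂ :=
  Matrix.of fun p q => M (idx p) (idx q)

/-- A pure quantum state: a rank-one (Hermitian, idempotent, trace-one) projection. -/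
def IsPure {n : ℕ} (p : Matrix (Fin n) (Fin n) ℂ) : Prop :=
  p.IsHermitian ∧ p * p = p ∧ p.trace = 1

noncomputable def E1 : Matrix (Fin 2 × Fin 2) (Fin 2 × Fin 2) ℂ :=
  toPair ((1/2 : ℂ) • !![2, 0, 0, -1; 0, 0, -1, 0; 0, -1, 0, 0; -1, 0, 0, 2])

noncomputable def E2 : Matrix (Fin 2 × Fin 2) (Fin 2 × Fin 2) ℂ :=
  toPair ((1/2 : ℂ) • !![0, 0, 0, 1; 0, 2, 1, 0; 0, 1, 2, 0; 1, 0, 0, 0])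

noncomputable def P0 : Matrix (Fin 2) (Fin 2) ℂ := !![1, 0; 0, 0]
noncomputable def Pplus : Matrix (Fin 2) (Fin 2) ℂ := (1/2 : ℂ) • !![1, 1; 1, 1]

theorem E1_add_E2 : E1 + E2 = 1 := by
  ext ⟨i, j⟩ ⟨k, l⟩
  fin_cases i <;> fin_cases j <;> fin_cases k <;> fin_cases l <;>
    norm_num [E1, E2, toPair, idx, Matrix.one_apply]

theorem trace_E1_mul_kronecker (p q : Matrix (Fin 2) (Fin 2) ℂ) :
    (E1 * (p ⊗ₖ q)).trace =
      p 0 0 * q 0 0 + p 1 1 * q 1 1 - (p 0 1 + p 1 0) * (q 0 1 + q 1 0) / 2 := by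
  simp only [trace, E1, toPair, idx, diag_apply, Matrix.mul_apply, Fintype.sum_prod_type,
    Fin.sum_univ_two, kroneckerMap_apply, of_apply, Matrix.smul_apply, smul_eq_mul,
    Fin.val_zero, Fin.val_one, Nat.reduceMul, Nat.reduceAdd, Fin.reduceFinMk, cons_val]
  ring

theorem trace_E2_mul_kronecker (p q : Matrix (Fin 2) (Fin 2) ℂ) :
    (E2 * (p ⊗ₖ q)).trace =
      p 0 0 * q 1 1 + p 1 1 * q 0 0 + (p 0 1 + p 1 0) * (q 0 1 + q 1 0) / 2 := by
  simp only [trace, E2, toPair, idx, diag_apply, Matrix.mul_apply, Fintype.sum_prod_type,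
    Fin.sum_univ_two, kroneckerMap_apply, of_apply, Matrix.smul_apply, smul_eq_mul,
    Fin.val_zero, Fin.val_one, Nat.reduceMul, Nat.reduceAdd, Fin.reduceFinMk, cons_val]
  ring

theorem IsPure.exists_real_entries {p : Matrix (Fin 2) (Fin 2) ℂ} (hp : IsPure p) :
    ∃ a x : ℝ, p 0 0 = a ∧ p 1 1 = 1 - a ∧ p 0 1 + p 1 0 = 2 * x ∧ x ^ 2 ≤ a * (1 - a) := by
  obtain ⟨hherm, hidem, htr⟩ := hp
  obtain ⟨a, hdiag⟩ : ∃ a : ℝ, p 0 0 = a := ⟨_, (hherm.coe_re_apply_self 0).symm⟩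
  have hoff : p 1 0 = starRingEnd ℂ (p 0 1) := (hherm.apply 1 0).symm
  have htr' : p 0 0 + p 1 1 = 1 := by simpa [Matrix.trace, Fin.sum_univ_two] using htr
  have hidem00 : p 0 0 * p 0 0 + p 0 1 * p 1 0 = p 0 0 := by
    simpa [Matrix.mul_apply, Fin.sum_univ_two] using congrFun (congrFun hidem 0) 0
  have hnormSq : Complex.normSq (p 0 1) = a * (1 - a) := by
    apply Complex.ofReal_injective
    rw [Complex.normSq_eq_conj_mul_self, ← hoff]
    rw [hdiag] at hidem00
    push_cast
    linear_combination hidem00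
  refine ⟨a, (p 0 1).re, hdiag, by linear_combination htr' - hdiag, ?_, ?_⟩
  · rw [hoff, Complex.add_conj]; push_cast; ring
  · rw [← hnormSq, Complex.normSq_apply]; nlinarith [sq_nonneg (p 0 1).im]

theorem two_mul_mul_le_of_sq_le {a c x y : ℝ} (hx : x ^ 2 ≤ a * (1 - a))
    (hy : y ^ 2 ≤ c * (1 - c)) : 2 * x * y ≤ a * c + (1 - a) * (1 - c) := by
  have hxa : 0 ≤ a * (1 - a) := (sq_nonneg x).trans hx
  have hyc : 0 ≤ c * (1 - c) := (sq_nonneg y).trans hy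
  have ha : 0 ≤ a ∧ 0 ≤ 1 - a := by constructor <;> nlinarith
  have hc : 0 ≤ c ∧ 0 ≤ 1 - c := by constructor <;> nlinarith
  have hsq : (2 * x * y) ^ 2 ≤ (a * c + (1 - a) * (1 - c)) ^ 2 :=
    calc (2 * x * y) ^ 2 = 4 * x ^ 2 * y ^ 2 := by ring
      _ ≤ 4 * (a * (1 - a)) * (c * (1 - c)) := by gcongr
      _ = 4 * (a * c) * ((1 - a) * (1 - c)) := by ring
      _ ≤ (a * c + (1 - a) * (1 - c)) ^ 2 := four_mul_le_sq_add _ _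
  have hnonneg : 0 ≤ a * c + (1 - a) * (1 - c) :=
    add_nonneg (mul_nonneg ha.1 hc.1) (mul_nonneg ha.2 hc.2)
  exact (le_abs_self _).trans (abs_le_of_sq_le_sq hsq hnonneg)

theorem exists_nonneg_trace_E1_mul_kronecker {p q : Matrix (Fin 2) (Fin 2) ℂ}
    (hp : IsPure p) (hq : IsPure q) : ∃ r : ℝ, 0 ≤ r ∧ (E1 * (p ⊗ₖ q)).trace = r := by
  obtain ⟨a, x, hp00, hp11, hpoff, hx⟩ := hp.exists_real_entries
  obtain ⟨c, y, hq00, hq11, hqoff, hy⟩ := hq.exists_real_entries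
  refine ⟨a * c + (1 - a) * (1 - c) - 2 * x * y,
    sub_nonneg.2 (two_mul_mul_le_of_sq_le hx hy), ?_⟩
  rw [trace_E1_mul_kronecker, hp00, hp11, hq00, hq11, hpoff, hqoff]
  push_cast
  ring

theorem exists_nonneg_trace_E2_mul_kronecker {p q : Matrix (Fin 2) (Fin 2) ℂ}
    (hp : IsPure p) (hq : IsPure q) : ∃ r : ℝ, 0 ≤ r ∧ (E2 * (p ⊗ₖ q)).trace = r := by
  obtain ⟨a, x, hp00, hp11, hpoff, hx⟩ := hp.exists_real_entries
  obtain ⟨c, y, hq00, hq11, hqoff, hy⟩ := hq.exists_real_entries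
  have hy' : (-y) ^ 2 ≤ (1 - c) * (1 - (1 - c)) := by linarith [neg_sq y, mul_comm c (1 - c)]
  refine ⟨a * (1 - c) + (1 - a) * c + 2 * x * y,
    by linarith [two_mul_mul_le_of_sq_le hx hy'], ?_⟩
  rw [trace_E2_mul_kronecker, hp00, hp11, hq00, hq11, hpoff, hqoff]
  push_cast
  ring

/-- the functionals `ρ ↦ Tr(E_i ρ)` form a measurement valid on all
separable states (`E₁ + E₂ = I`, nonnegative on every product pure state) that
perfectly discriminates `|0⟩⟨0|⊗|0⟩⟨0|` from `|+⟩⟨+|⊗|+⟩⟨+|`. -/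
theorem sep_effects_discriminate :
    E1 + E2 = 1 ∧
    (∀ p q : Matrix (Fin 2) (Fin 2) ℂ, IsPure p → IsPure q →
      (∃ r : ℝ, 0 ≤ r ∧ (E1 * (p ⊗ₖ q)).trace = (r : ℂ)) ∧
      (∃ r : ℝ, 0 ≤ r ∧ (E2 * (p ⊗ₖ q)).trace = (r : ℂ))) ∧
    (E1 * (P0 ⊗ₖ P0)).trace = 1 ∧ (E1 * (Pplus ⊗ₖ Pplus)).trace = 0 ∧
    (E2 * (P0 ⊗ₖ P0)).trace = 0 ∧ (E2 * (Pplus ⊗ₖ Pplus)).trace = 1 := by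
  refine ⟨E1_add_E2, fun p q hp hq => ⟨exists_nonneg_trace_E1_mul_kronecker hp hq,
    exists_nonneg_trace_E2_mul_kronecker hp hq⟩, ?_, ?_, ?_, ?_⟩ <;>
    norm_num [trace_E1_mul_kronecker, trace_E2_mul_kronecker, P0, Pplus]
end

section
/- Groenewold–Ozawa information gain is monotone under Groenewold majorization: let Ω be a state space with an entropy function H defined (and uniquely valued) on states, and suppose H is concave. For a state ρ and instrument s = {s_j} with outcome probabilities e_j(ρ) = u(s_j(ρ)), define I_G(ρ, s) = H(ρ) − Σ_j e_j(ρ) H(s_j(ρ)/e_j(ρ)). Then for any two instruments s, t, the relation t ≻_ρ s implies I_G(ρ, t) ≥ I_G(ρ, s). -/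
open scoped BigOperators

/-- Membership in the cone generated by the state space `Ω`. -/
def InCone {V : Type} [AddCommGroup V] [Module ℝ V] (Ω : Set V) (x : V) : Prop :=
  ∃ c : ℝ, 0 ≤ c ∧ ∃ σ ∈ Ω, x = c • σ

/-- An instrument: a finite family of affine maps into the cone over `Ω`,
with total weight (normalization) one on every state. -/
def IsInstrument {V : Type} [AddCommGroup V] [Module ℝ V] (Ω : Set V) (u : V →ₗ[ℝ] ℝ)
    {J : Type} [Fintype J] (s : J → V →ᵃ[ℝ] V) : Prop :=
  ∀ ρ ∈ Ω, (∀ j, InCone Ω (s j ρ)) ∧ ∑ j, u (s j ρ) = 1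

/-- Groenewold majorization at the state `ρ`: `t ≻_ρ s` iff `s`'s outputs at `ρ`
are a stochastic post-processing of `t`'s outputs at `ρ`. -/
def Maj {V : Type} [AddCommGroup V] [Module ℝ V] (ρ : V)
    {J K : Type} [Fintype J] [Fintype K]
    (t : K → V →ᵃ[ℝ] V) (s : J → V →ᵃ[ℝ] V) : Prop :=
  ∃ p : J → K → ℝ, (∀ j k, 0 ≤ p j k) ∧ (∀ k, ∑ j, p j k = 1) ∧
    ∀ j, s j ρ = ∑ k, p j k • t k ρ

/-- A fine-grained instrument: for every state `ρ`, any instrument that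
Groenewold-majorizes it at `ρ` is also majorized by it at `ρ`. -/
def FineGrained {V : Type} [AddCommGroup V] [Module ℝ V] (Ω : Set V) (u : V →ₗ[ℝ] ℝ)
    {J : Type} [Fintype J] (s : J → V →ᵃ[ℝ] V) : Prop :=
  ∀ ρ ∈ Ω, ∀ (K : Type) (_ : Fintype K), ∀ t : K → V →ᵃ[ℝ] V,
    IsInstrument Ω u t → Maj ρ t s → Maj ρ s t

/-- The Groenewold–Ozawa information gain of the instrument `s` on the state `ρ`,
relative to the entropy function `H` (terms with zero outcome probability vanish). -/
noncomputable def IG {V : Type} [AddCommGroup V] [Module ℝ V]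
    (H : V → ℝ) (u : V →ₗ[ℝ] ℝ) {J : Type} [Fintype J]
    (s : J → V →ᵃ[ℝ] V) (ρ : V) : ℝ :=
  H ρ - ∑ j, u (s j ρ) * H ((u (s j ρ))⁻¹ • s j ρ)

/-!
Write `P(x) = u(x) H(x / u(x))` for the perspective of `H` along the normalization `u`, so that
`I_G(ρ, s) = H(ρ) - Σ_j P(s_j ρ)`. The perspective is positively homogeneous, and on the cone over `Ω`
concavity of `H` (Jensen's inequality for the center of mass of the normalized states) makes it
superadditive. If `s_j ρ = Σ_k p(j|k) t_k ρ` with `Σ_j p(j|k) = 1`, then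
`Σ_k P(t_k ρ) = Σ_j Σ_k P(p(j|k) t_k ρ) ≤ Σ_j P(s_j ρ)`.
-/

open Finset

theorem InCone.smul {V : Type} [AddCommGroup V] [Module ℝ V] {Ω : Set V} {x : V}
    (hx : InCone Ω x) {a : ℝ} (ha : 0 ≤ a) : InCone Ω (a • x) := by
  obtain ⟨c, hc, σ, hσ, rfl⟩ := hx
  exact ⟨a * c, mul_nonneg ha hc, σ, hσ, smul_smul a c σ⟩

theorem ConcaveOn.sum_mul_le_sum_mul_map_centerMass {E ι : Type*} [AddCommGroup E] [Module ℝ E]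
    {Ω : Set E} {H : E → ℝ} (hH : ConcaveOn ℝ Ω H) (t : Finset ι) {w : ι → ℝ} {σ : ι → E}
    (hw : ∀ i ∈ t, 0 ≤ w i) (hσ : ∀ i ∈ t, σ i ∈ Ω) :
    ∑ i ∈ t, w i * H (σ i) ≤ (∑ i ∈ t, w i) * H (t.centerMass w σ) := by
  rcases (sum_nonneg hw).eq_or_lt with hzero | hpos
  · have hw0 : ∀ i ∈ t, w i = 0 := (sum_eq_zero_iff_of_nonneg hw).1 hzero.symm
    rw [← hzero, zero_mul, sum_eq_zero fun i hi => by rw [hw0 i hi, zero_mul]]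
  · have hJensen := hH.le_map_centerMass hw hpos hσ
    rw [centerMass, smul_eq_mul, inv_mul_le_iff₀ hpos] at hJensen
    simpa only [Function.comp_apply, smul_eq_mul] using hJensen

section Perspective

variable {V : Type*} [AddCommGroup V] [Module ℝ V] (u : V →ₗ[ℝ] ℝ) (H : V → ℝ)

/-- The perspective of `H` along `u`; for `u x = 0` it is `0`. -/
noncomputable def perspective (x : V) : ℝ :=
  u x * H ((u x)⁻¹ • x)

variable {u H}

theorem perspective_smul {a : ℝ} (ha : 0 ≤ a) (x : V) :
    perspective u H (a • x) = a * perspective u H x := by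
  rcases ha.eq_or_lt with rfl | hpos
  · simp [perspective]
  · rw [perspective, perspective, map_smul, smul_eq_mul, smul_smul, mul_inv,
      mul_right_comm a⁻¹, inv_mul_cancel₀ hpos.ne', one_mul, mul_assoc]

theorem perspective_eq_of_map_eq_one {σ : V} (hσ : u σ = 1) : perspective u H σ = H σ := by
  rw [perspective, hσ, inv_one, one_smul, one_mul]

end Perspective

theorem ConcaveOn.sum_perspective_le {V : Type} [AddCommGroup V] [Module ℝ V] {u : V →ₗ[ℝ] ℝ}
    {H : V → ℝ} {Ω : Set V} (hH : ConcaveOn ℝ Ω H) (hu : ∀ σ ∈ Ω, u σ = 1)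
    {ι : Type*} [Fintype ι] {x : ι → V} (hx : ∀ i, InCone Ω (x i)) :
    ∑ i, perspective u H (x i) ≤ perspective u H (∑ i, x i) := by
  choose c hc σ hσ hxσ using hx
  simp only [hxσ, perspective_smul (hc _), perspective_eq_of_map_eq_one (hu _ (hσ _))]
  have hmass : u (∑ i, c i • σ i) = ∑ i, c i := by
    simp [map_sum, map_smul, hu _ (hσ _)]
  rw [perspective, hmass]
  exact hH.sum_mul_le_sum_mul_map_centerMass univ (fun i _ => hc i) fun i _ => hσ i

theorem information_gain_monotone_general
    {V : Type} [AddCommGroup V] [Module ℝ V]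
    (Ω : Set V)
    (u : V →ₗ[ℝ] ℝ) (hu : ∀ σ ∈ Ω, u σ = 1)
    (H : V → ℝ) (hH : ConcaveOn ℝ Ω H)
    {J K : Type} [Fintype J] [Fintype K]
    (s : J → V →ᵃ[ℝ] V) (t : K → V →ᵃ[ℝ] V)
    (ht : IsInstrument Ω u t)
    (ρ : V) (hρ : ρ ∈ Ω) (hmaj : Maj ρ t s) :
    IG H u s ρ ≤ IG H u t ρ := by
  obtain ⟨p, hp0, hp1, hps⟩ := hmaj
  have hcone : ∀ k, InCone Ω (t k ρ) := (ht ρ hρ).1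
  suffices ∑ k, perspective u H (t k ρ) ≤ ∑ j, perspective u H (s j ρ) from
    sub_le_sub_left this (H ρ)
  calc ∑ k, perspective u H (t k ρ)
      = ∑ k, ∑ j, p j k * perspective u H (t k ρ) := by simp only [← sum_mul, hp1, one_mul]
    _ = ∑ j, ∑ k, perspective u H (p j k • t k ρ) := by
        rw [sum_comm]; simp only [perspective_smul (hp0 _ _)]
    _ ≤ ∑ j, perspective u H (∑ k, p j k • t k ρ) :=
        sum_le_sum fun j _ => hH.sum_perspective_le hu fun k => (hcone k).smul (hp0 j k)
    _ = ∑ j, perspective u H (s j ρ) := by simp only [hps]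

/-- for any concave entropy function `H` on the state space, the
Groenewold–Ozawa information gain is monotone under Groenewold majorization:
`t ≻_ρ s` implies `I_G(ρ,t) ≥ I_G(ρ,s)`. -/
theorem information_gain_monotone
    {V : Type} [AddCommGroup V] [Module ℝ V]
    (Ω : Set V) (hconv : Convex ℝ Ω)
    (u : V →ₗ[ℝ] ℝ) (hu : ∀ σ ∈ Ω, u σ = 1)
    (H : V → ℝ) (hH : ConcaveOn ℝ Ω H)
    {J K : Type} [Fintype J] [Fintype K]
    (s : J → V →ᵃ[ℝ] V) (t : K → V →ᵃ[ℝ] V)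
    (hs : IsInstrument Ω u s) (ht : IsInstrument Ω u t)
    (ρ : V) (hρ : ρ ∈ Ω) (hmaj : Maj ρ t s) :
    IG H u s ρ ≤ IG H u t ρ :=
  information_gain_monotone_general Ω u hu H hH s t ht ρ hρ hmaj
end

section
/- If a mixed element cannot majorize a pure one: let Ω be a convex set, ρ a state, and s = {s_j} an instrument such that some normalized output σ = s_{j₀}(ρ)/e_{j₀}(ρ) is not an extreme point of Ω. Construct the refinement t of s obtained by splitting s_{j₀} according to a nontrivial convex decomposition σ = Σ_l q_l σ_l into at least two distinct states. Then t ≻_ρ s but s ⊁_ρ t; hence s is not fine-grained. -/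
open scoped BigOperators

/-! The refinement `t` replaces outcome `j₀` by the pieces `u (s j₀ ρ) q_l σ_l`; merging them back
shows `t ≻_ρ s`. For the converse, measure the `u`-mass of the outputs lying on the ray through
the extreme point `σ_{l₀}`. The ray through an extreme point is a face of the cone over `Ω`: if a
sum of cone elements lies on it, so does every summand. Hence a stochastic post-processing cannot
increase the mass on the ray. But `t` has all the mass of `s` there, since `s_{j₀}(ρ)` is not on
it (its normalization is not extreme), plus the additional mass `u (s j₀ ρ) q_{l₀} > 0`. -/
section Cone

variable {V : Type} [AddCommGroup V] [Module ℝ V] {Ω : Set V} {u : V →ₗ[ℝ] ℝ} {x : V}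

lemma InCone.zero {σ : V} (hσ : σ ∈ Ω) : InCone Ω 0 :=
  ⟨0, le_rfl, σ, hσ, (zero_smul ℝ σ).symm⟩

lemma InCone.smul_s14 (hx : InCone Ω x) {c : ℝ} (hc : 0 ≤ c) : InCone Ω (c • x) := by
  obtain ⟨a, ha, σ, hσ, rfl⟩ := hx
  exact ⟨c * a, mul_nonneg hc ha, σ, hσ, (mul_smul c a σ).symm⟩

lemma InCone.add (hΩ : Convex ℝ Ω) {y : V} (hx : InCone Ω x) (hy : InCone Ω y) :
    InCone Ω (x + y) := by
  obtain ⟨a, ha, σ, hσ, rfl⟩ := hx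
  obtain ⟨b, hb, τ, hτ, rfl⟩ := hy
  rcases ha.eq_or_lt with rfl | ha
  · simpa using InCone.smul_s14 ⟨1, zero_le_one, τ, hτ, (one_smul ℝ τ).symm⟩ hb
  have hab : 0 < a + b := by positivity
  refine ⟨a + b, hab.le, (a / (a + b)) • σ + (b / (a + b)) • τ,
    hΩ hσ hτ (by positivity) (by positivity) (by field_simp), ?_⟩
  rw [smul_add, smul_smul, smul_smul, mul_div_cancel₀ _ hab.ne', mul_div_cancel₀ _ hab.ne']

lemma InCone.apply_nonneg (hu : ∀ σ ∈ Ω, u σ = 1) (hx : InCone Ω x) : 0 ≤ u x := by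
  obtain ⟨c, hc, σ, hσ, rfl⟩ := hx
  rwa [map_smul, hu σ hσ, smul_eq_mul, mul_one]

lemma InCone.exists_eq_smul (hu : ∀ σ ∈ Ω, u σ = 1) (hx : InCone Ω x) :
    ∃ σ ∈ Ω, x = u x • σ := by
  obtain ⟨c, hc, σ, hσ, rfl⟩ := hx
  exact ⟨σ, hσ, by rw [map_smul, hu σ hσ, smul_eq_mul, mul_one]⟩

lemma InCone.mem_span_of_add_mem_span (hu : ∀ σ ∈ Ω, u σ = 1) (hx : x ∈ Ω.extremePoints ℝ)
    {a b : V} (ha : InCone Ω a) (hb : InCone Ω b) (hab : a + b ∈ ℝ ∙ x) : a ∈ ℝ ∙ x := by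
  obtain ⟨σ, hσ, haσ⟩ := ha.exists_eq_smul hu
  obtain ⟨τ, hτ, hbτ⟩ := hb.exists_eq_smul hu
  rcases (ha.apply_nonneg hu).eq_or_lt with ha0 | ha0
  · rw [haσ, ← ha0, zero_smul]
    exact Submodule.zero_mem _
  rcases (hb.apply_nonneg hu).eq_or_lt with hb0 | hb0
  · rwa [hbτ, ← hb0, zero_smul, add_zero] at hab
  obtain ⟨c, hc⟩ := Submodule.mem_span_singleton.mp hab
  have hc_eq : c = u a + u b := by simpa [hu x hx.1] using congrArg u hc
  have hcx : c • x = u a • σ + u b • τ := by rw [hc, ← haσ, ← hbτ]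
  have hc0 : 0 < c := by linarith
  have hseg : x ∈ openSegment ℝ σ τ := by
    refine ⟨u a / c, u b / c, by positivity, by positivity, by field_simp; linarith, ?_⟩
    rw [div_eq_inv_mul, div_eq_inv_mul, mul_smul, mul_smul, ← smul_add, ← hcx,
      inv_smul_smul₀ hc0.ne']
  rw [haσ, hx.2 hσ hτ hseg]
  exact Submodule.smul_mem _ _ (Submodule.mem_span_singleton_self x)

lemma InCone.mem_span_of_sum_mem_span (hΩ : Convex ℝ Ω) (hu : ∀ σ ∈ Ω, u σ = 1)
    (hx : x ∈ Ω.extremePoints ℝ) {ι : Type} {t : Finset ι} {c : ι → V}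
    (hc : ∀ i ∈ t, InCone Ω (c i)) (hsum : ∑ i ∈ t, c i ∈ ℝ ∙ x) {i : ι} (hi : i ∈ t) :
    c i ∈ ℝ ∙ x := by
  classical
  have hrest : InCone Ω (∑ j ∈ t.erase i, c j) :=
    Finset.sum_induction _ _ (fun _ _ => InCone.add hΩ) (InCone.zero hx.1)
      fun j hj => hc j (Finset.mem_of_mem_erase hj)
  rw [← Finset.add_sum_erase t c hi] at hsum
  exact (hc i hi).mem_span_of_add_mem_span hu hx hrest hsum

end Cone

section Mass

variable {V : Type} [AddCommGroup V] [Module ℝ V] {Ω : Set V} {u : V →ₗ[ℝ] ℝ}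

noncomputable def massOn (u : V →ₗ[ℝ] ℝ) (S : Set V) {K : Type} [Fintype K] (a : K → V) : ℝ :=
  ∑ k, S.indicator u (a k)

lemma indicator_span_sum_smul_le (hΩ : Convex ℝ Ω) (hu : ∀ σ ∈ Ω, u σ = 1)
    {x : V} (hx : x ∈ Ω.extremePoints ℝ) {J : Type} [Fintype J] {a : J → V}
    (ha : ∀ j, InCone Ω (a j)) {w : J → ℝ} (hw : ∀ j, 0 ≤ w j) :
    (ℝ ∙ x : Set V).indicator u (∑ j, w j • a j) ≤
      ∑ j, w j * (ℝ ∙ x : Set V).indicator u (a j) := by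
  by_cases hb : ∑ j, w j • a j ∈ ℝ ∙ x
  · rw [Set.indicator_of_mem hb, map_sum]
    refine le_of_eq (Finset.sum_congr rfl fun j _ => ?_)
    by_cases haj : a j ∈ ℝ ∙ x
    · rw [Set.indicator_of_mem haj, map_smul, smul_eq_mul]
    · have hwj : w j = 0 := by
        by_contra hwj
        have h := InCone.mem_span_of_sum_mem_span hΩ hu hx (fun j _ => (ha j).smul_s14 (hw j)) hb
          (Finset.mem_univ j)
        exact haj (by simpa [hwj] using Submodule.smul_mem _ (w j)⁻¹ h)
      simp [hwj]
  · rw [Set.indicator_of_notMem hb]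
    exact Finset.sum_nonneg fun j _ => mul_nonneg (hw j)
      (Set.indicator_apply_nonneg fun _ => (ha j).apply_nonneg hu)

lemma massOn_span_le_of_maj (hΩ : Convex ℝ Ω) (hu : ∀ σ ∈ Ω, u σ = 1)
    {x : V} (hx : x ∈ Ω.extremePoints ℝ) {ρ : V} {J K : Type} [Fintype J] [Fintype K]
    {s : J → V →ᵃ[ℝ] V} {t : K → V →ᵃ[ℝ] V} (hs : ∀ j, InCone Ω (s j ρ)) (h : Maj ρ s t) :
    massOn u (ℝ ∙ x) (fun k => t k ρ) ≤ massOn u (ℝ ∙ x) (fun j => s j ρ) := by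
  obtain ⟨p, hp0, hp1, ht⟩ := h
  calc massOn u (ℝ ∙ x) (fun k => t k ρ)
      = ∑ k, (ℝ ∙ x : Set V).indicator u (∑ j, p k j • s j ρ) := by simp only [massOn, ht]
    _ ≤ ∑ k, ∑ j, p k j * (ℝ ∙ x : Set V).indicator u (s j ρ) :=
      Finset.sum_le_sum fun k _ => indicator_span_sum_smul_le hΩ hu hx hs (hp0 k)
    _ = massOn u (ℝ ∙ x) (fun j => s j ρ) := by
      rw [Finset.sum_comm]
      simp only [← Finset.sum_mul, hp1, one_mul, massOn]

end Mass

lemma Fintype.sum_subtype_ne_add {J M : Type} [Fintype J] [DecidableEq J] [AddCommMonoid M]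
    (f : J → M) (j₀ : J) : ∑ j : {j // j ≠ j₀}, f j + f j₀ = ∑ j, f j := by
  rw [← Finset.sum_erase_add _ _ (Finset.mem_univ j₀),
    ← Finset.sum_subtype (Finset.univ.erase j₀) (by simp)]

lemma maj_of_eq_sum_fiber {V : Type} [AddCommGroup V] [Module ℝ V] {ρ : V}
    {J K : Type} [Fintype J] [Fintype K] [DecidableEq J]
    {t : K → V →ᵃ[ℝ] V} {s : J → V →ᵃ[ℝ] V} (π : K → J)
    (h : ∀ j, s j ρ = ∑ k with π k = j, t k ρ) : Maj ρ t s := by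
  refine ⟨fun j k => if π k = j then 1 else 0, fun j k => ite_nonneg zero_le_one le_rfl,
    fun k => by simp, fun j => ?_⟩
  simp [h j, Finset.sum_filter, ite_smul]

section Split

variable {V : Type} [AddCommGroup V] [Module ℝ V] {Ω : Set V} {u : V →ₗ[ℝ] ℝ}
  {J L : Type}

def splitOutcome (u : V →ₗ[ℝ] ℝ) (s : J → V →ᵃ[ℝ] V) (j₀ : J) (q : L → ℝ) (σ : L → V) :
    {j : J // j ≠ j₀} ⊕ L → V →ᵃ[ℝ] V :=
  Sum.elim (fun j => s j) fun l =>
    (LinearMap.toSpanSingleton ℝ V (q l • σ l)).toAffineMap.comp (u.toAffineMap.comp (s j₀))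

variable {s : J → V →ᵃ[ℝ] V} {j₀ : J} {q : L → ℝ} {σ : L → V}

@[simp]
lemma splitOutcome_inl (j : {j : J // j ≠ j₀}) : splitOutcome u s j₀ q σ (.inl j) = s j := rfl

@[simp]
lemma splitOutcome_inr_apply (l : L) (x : V) :
    splitOutcome u s j₀ q σ (.inr l) x = (u (s j₀ x) * q l) • σ l := by
  simp [splitOutcome, mul_smul]

variable [Fintype J] [DecidableEq J] [Fintype L]

lemma isInstrument_splitOutcome (hu : ∀ σ ∈ Ω, u σ = 1) (hs : IsInstrument Ω u s)
    (hq0 : ∀ l, 0 ≤ q l) (hq1 : ∑ l, q l = 1) (hσ : ∀ l, σ l ∈ Ω) :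
    IsInstrument Ω u (splitOutcome u s j₀ q σ) := by
  intro x hx
  obtain ⟨hcone, hnorm⟩ := hs x hx
  refine ⟨?_, ?_⟩
  · rintro (j | l)
    · exact hcone j
    · exact ⟨_, mul_nonneg ((hcone j₀).apply_nonneg hu) (hq0 l), σ l, hσ l,
        splitOutcome_inr_apply l x⟩
  · simp only [Fintype.sum_sum_type, splitOutcome_inl, splitOutcome_inr_apply, map_smul,
      hu _ (hσ _), smul_eq_mul, mul_one, ← Finset.mul_sum, hq1]
    rw [Fintype.sum_subtype_ne_add (fun j => u (s j x)), hnorm]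

lemma maj_splitOutcome {ρ : V}
    (hsplit : ∑ l, (u (s j₀ ρ) * q l) • σ l = s j₀ ρ) : Maj ρ (splitOutcome u s j₀ q σ) s := by
  refine maj_of_eq_sum_fiber (Sum.elim Subtype.val fun _ => j₀) fun j => ?_
  rw [Finset.sum_filter, Fintype.sum_sum_type]
  by_cases hj : j = j₀
  · subst hj
    simp only [Sum.elim_inl, splitOutcome_inl, Sum.elim_inr, ↓reduceIte, splitOutcome_inr_apply,
      hsplit, right_eq_add]
    exact Finset.sum_eq_zero fun i _ => if_neg i.2
  · have h := Fintype.sum_subtype_ne_add (fun i => if i = j then s i ρ else 0) j₀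
    simp only [Finset.sum_ite_eq', Finset.mem_univ, if_true, if_neg (Ne.symm hj), add_zero] at h
    simp only [Sum.elim_inl, splitOutcome_inl, Sum.elim_inr, Ne.symm hj, ↓reduceIte,
      Finset.sum_const_zero, add_zero]
    exact h.symm

lemma massOn_add_le_massOn_splitOutcome {ρ : V} (hσ : ∀ l, u (σ l) = 1) (hq0 : ∀ l, 0 ≤ q l)
    (hs₀ : 0 ≤ u (s j₀ ρ)) (l₀ : L) (hs₀σ : s j₀ ρ ∉ ℝ ∙ σ l₀) :
    massOn u (ℝ ∙ σ l₀) (fun j => s j ρ) + u (s j₀ ρ) * q l₀ ≤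
      massOn u (ℝ ∙ σ l₀) (fun k => splitOutcome u s j₀ q σ k ρ) := by
  have hu_inr : ∀ l, u ((u (s j₀ ρ) * q l) • σ l) = u (s j₀ ρ) * q l := fun l => by
    rw [map_smul, hσ l, smul_eq_mul, mul_one]
  have hl₀ : u (s j₀ ρ) * q l₀ ≤
      ∑ l, (ℝ ∙ σ l₀ : Set V).indicator u ((u (s j₀ ρ) * q l) • σ l) := by
    refine le_trans (le_of_eq ?_) (Finset.single_le_sum (fun l _ => ?_) (Finset.mem_univ l₀))
    · rw [Set.indicator_of_mem (Submodule.smul_mem _ _ (Submodule.mem_span_singleton_self _)),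
        hu_inr]
    · exact Set.indicator_apply_nonneg fun _ => (hu_inr l).symm ▸ mul_nonneg hs₀ (hq0 l)
  rw [massOn, massOn, Fintype.sum_sum_type, ← Fintype.sum_subtype_ne_add _ j₀,
    Set.indicator_of_notMem hs₀σ, add_zero]
  simpa using hl₀

end Split

theorem mixed_output_not_fine_grained_general
    {V : Type} [AddCommGroup V] [Module ℝ V]
    (Ω : Set V) (hconv : Convex ℝ Ω)
    (u : V →ₗ[ℝ] ℝ) (hu : ∀ σ ∈ Ω, u σ = 1)
    {J : Type} [Fintype J] [DecidableEq J]
    (s : J → V →ᵃ[ℝ] V) (hs : IsInstrument Ω u s)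
    (ρ : V) (hρ : ρ ∈ Ω) (j₀ : J) (he : 0 < u (s j₀ ρ))
    {L : Type} [Fintype L] (q : L → ℝ) (σl : L → V)
    (hq0 : ∀ l, 0 < q l) (hq1 : ∑ l, q l = 1)
    (hσl : ∀ l, σl l ∈ Set.extremePoints ℝ Ω)
    (hmixed : (u (s j₀ ρ))⁻¹ • s j₀ ρ ∉ Set.extremePoints ℝ Ω)
    (hdecomp : (u (s j₀ ρ))⁻¹ • s j₀ ρ = ∑ l, q l • σl l) :
    ∃ t : ({j : J // j ≠ j₀} ⊕ L) → V →ᵃ[ℝ] V,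
      IsInstrument Ω u t ∧
      (∀ j : {j : J // j ≠ j₀}, t (Sum.inl j) = s j.1) ∧
      (∀ l : L, t (Sum.inr l) ρ = (u (s j₀ ρ) * q l) • σl l) ∧
      Maj ρ t s ∧ ¬ Maj ρ s t ∧ ¬ FineGrained Ω u s := by
  have hσΩ : ∀ l, σl l ∈ Ω := fun l => (hσl l).1
  obtain ⟨l₀, -, -⟩ := Finset.exists_ne_zero_of_sum_ne_zero (hq1 ▸ one_ne_zero : ∑ l, q l ≠ 0)
  set t := splitOutcome u s j₀ q σl
  have ht : IsInstrument Ω u t :=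
    isInstrument_splitOutcome hu hs (fun l => (hq0 l).le) hq1 hσΩ
  have hmaj : Maj ρ t s := maj_splitOutcome <| by
    simp_rw [mul_smul, ← Finset.smul_sum, ← hdecomp, smul_inv_smul₀ he.ne']
  have hs₀ : s j₀ ρ ∉ ℝ ∙ σl l₀ := by
    intro hmem
    obtain ⟨c, hc⟩ := Submodule.mem_span_singleton.mp hmem
    have hcu : u (c • σl l₀) = c := by rw [map_smul, hu _ (hσΩ l₀), smul_eq_mul, mul_one]
    rw [← hc, hcu, smul_smul, inv_mul_cancel₀ (hcu ▸ hc ▸ he.ne'), one_smul] at hmixed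
    exact hmixed (hσl l₀)
  have hnmaj : ¬ Maj ρ s t := fun h => by
    have hle := massOn_span_le_of_maj hconv hu (hσl l₀) (hs ρ hρ).1 h
    have hlt := massOn_add_le_massOn_splitOutcome (fun l => hu _ (hσΩ l)) (fun l => (hq0 l).le)
      he.le l₀ hs₀
    linarith [mul_pos he (hq0 l₀)]
  exact ⟨t, ht, fun _ => rfl, splitOutcome_inr_apply (x := ρ), hmaj, hnmaj,
    fun hfg => hnmaj (hfg ρ hρ _ _ t ht hmaj)⟩

/-- a mixed output obstructs fine-graining. If the `j₀`-th normalized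
output `σ` of an instrument `s` at `ρ` is not extreme and admits a nontrivial convex
decomposition `σ = Σ_l q_l σ_l` into at least two distinct pure states, then the
refinement `t` of `s` obtained by splitting the `j₀`-th outcome accordingly satisfies
`t ≻_ρ s` but not `s ≻_ρ t`; hence `s` is not fine-grained. -/
theorem mixed_output_not_fine_grained
    {V : Type} [AddCommGroup V] [Module ℝ V]
    (Ω : Set V) (hconv : Convex ℝ Ω)
    (u : V →ₗ[ℝ] ℝ) (hu : ∀ σ ∈ Ω, u σ = 1)
    {J : Type} [Fintype J] [DecidableEq J]
    (s : J → V →ᵃ[ℝ] V) (hs : IsInstrument Ω u s)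
    (ρ : V) (hρ : ρ ∈ Ω) (j₀ : J) (he : 0 < u (s j₀ ρ))
    {L : Type} [Fintype L] (q : L → ℝ) (σl : L → V)
    (hq0 : ∀ l, 0 < q l) (hq1 : ∑ l, q l = 1)
    (hσl : ∀ l, σl l ∈ Set.extremePoints ℝ Ω)
    (hinj : Function.Injective σl) (hcard : 1 < Fintype.card L)
    (hmixed : (u (s j₀ ρ))⁻¹ • s j₀ ρ ∉ Set.extremePoints ℝ Ω)
    (hdecomp : (u (s j₀ ρ))⁻¹ • s j₀ ρ = ∑ l, q l • σl l) :
    ∃ t : ({j : J // j ≠ j₀} ⊕ L) → V →ᵃ[ℝ] V,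
      IsInstrument Ω u t ∧
      (∀ j : {j : J // j ≠ j₀}, t (Sum.inl j) = s j.1) ∧
      (∀ l : L, t (Sum.inr l) ρ = (u (s j₀ ρ) * q l) • σl l) ∧
      Maj ρ t s ∧ ¬ Maj ρ s t ∧ ¬ FineGrained Ω u s :=
  mixed_output_not_fine_grained_general Ω hconv u hu s hs ρ hρ j₀ he q σl hq0 hq1 hσl hmixed hdecomp
end
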